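/- Let p be an odd prime, k ≥ 2 an integer, and s a finite multiset of complex p^k-th roots of unity. If the number of entries of s of multiplicative order exactly p^k (counted with multiplicity) is not divisible by p, or if the number of distinct entries of s of multiplicative order exactly p^k is not divisible by p, then the conductor of |s| equals p^k. -/

import Mathlib

open CategoryTheory

/-- `Qcyc N` is the `N`-th cyclotomic field `ℚ(ζ_N)`, realised as the subfield of `ℂ`
generated by all `N`-th roots of unity. -/
noncomputable def Qcyc (N : ℕ) : IntermediateField ℚ ℂ :=
  IntermediateField.adjoin ℚ {z : ℂ | z ^ N = 1}

/-- `Qadj c` is the subfield `ℚ(c)` of `ℂ` generated by a complex number `c`. -/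
noncomputable def Qadj (c : ℂ) : IntermediateField ℚ ℂ :=
  IntermediateField.adjoin ℚ {c}

/-- `f` is the conductor of the complex number `c`: the least positive integer `N`
with `c ∈ ℚ(ζ_N)`. -/
def IsConductorOf (c : ℂ) (f : ℕ) : Prop :=
  IsLeast {N : ℕ | 0 < N ∧ c ∈ Qcyc N} f

/-- `f` is the conductor of the character `χ`: the least positive integer `N` such that all
values of `χ` lie in `ℚ(ζ_N)`. -/
def IsCharConductor {G : Type*} [Monoid G] (χ : G → ℂ) (f : ℕ) : Prop :=
  IsLeast {N : ℕ | 0 < N ∧ ∀ g, χ g ∈ Qcyc N} f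

/-- Property 1.3 of Navarro–Tiep for `(G, χ, p)`: writing the conductor of `χ` as
`f = p ^ a * m` with `p ∤ m` (so that `p ^ a = p ^ (f.factorization p)` is the `p`-part of `f`),
there is a `p`-element `g ∈ G` such that `p ∤ [ℚ(ζ_{p^a}) : ℚ(χ(g))]`. -/
def Property13 {G : Type*} [Group G] (χ : G → ℂ) (p : ℕ) : Prop :=
  ∀ f : ℕ, IsCharConductor χ f →
    ∃ g : G, (∃ j : ℕ, orderOf g = p ^ j) ∧
      ¬ p ∣ (Qadj (χ g)).relfinrank (Qcyc (p ^ f.factorization p))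

/-!
Let `ξ` be a primitive `p ^ k`-th root of unity and write `|s| = ∑ₐ mₐ ξ ^ a`. If `|s|` lay in
`ℚ(ζ_N)` with `p ^ k ∤ N`, it would lie in `K = ℚ(ζ_{p^(k-1) n})` with `p ∤ n`. Since `k ≥ 2`,
`ℚ(ζ_{p^k n}) = K(ξ)` has degree `p` over `K`. Grouping exponents by their residue `r` mod `p`
gives `|s| = ∑_{r<p} c_r ξ ^ r` with `c_r = ∑_q m_{qp+r} η ^ q ∈ K`, `η = ξ ^ p`, so `c_r = 0`
for `0 < r < p`. A vanishing `ℕ`-combination of the `p ^ (k-1)`-th roots of unity is a multiple of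
`Φ_{p^(k-1)} = ∑_{l<p} X ^ (l p ^ (k-2))`, so its coefficients are periodic modulo `p ^ (k-2)`:
the total multiplicity and the number of nonzero coefficients in each class `r ≠ 0` are therefore
divisible by `p`. The exponents prime to `p` are exactly those of the entries of order `p ^ k`.
-/

open Polynomial Finset IntermediateField

theorem sum_range_mul_eq_sum_sum {M : Type*} [AddCommMonoid M] (f : ℕ → M) (m n : ℕ) :
    ∑ x ∈ range (m * n), f x = ∑ i ∈ range m, ∑ j ∈ range n, f (i * n + j) := by
  induction m with
  | zero => simp
  | succ m ih => rw [Nat.succ_mul, sum_range_add, ih, sum_range_succ]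

theorem Polynomial.natDegree_sum_range_C_mul_X_pow_lt {R : Type*} [Semiring R] {n : ℕ}
    (hn : n ≠ 0) (c : ℕ → R) : (∑ a ∈ range n, C (c a) * X ^ a).natDegree < n := by
  refine (natDegree_sum_le_of_forall_le _ _ fun a ha => ?_).trans_lt (Nat.pred_lt hn)
  exact (natDegree_C_mul_X_pow_le _ _).trans (Nat.le_pred_of_lt (mem_range.1 ha))

theorem Polynomial.coeff_geom_sum_X_pow_mul {R : Type*} [Semiring R] {N d : ℕ} {h : R[X]}
    (hh : h.natDegree < N) {i j : ℕ} (hi : i < d) (hj : j < N) :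
    ((∑ l ∈ range d, (X ^ N) ^ l) * h).coeff (i * N + j) = h.coeff j := by
  simp_rw [sum_mul, finsetSum_coeff, ← pow_mul, coeff_X_pow_mul']
  rw [sum_eq_single_of_mem i (mem_range.2 hi), if_pos (by nlinarith), mul_comm N i,
    Nat.add_sub_cancel_left]
  intro l _ hli
  split_ifs with hle
  · refine coeff_eq_zero_of_natDegree_lt ?_
    rcases hli.lt_or_gt with hl | hl
    · have : N * l + N ≤ i * N := by nlinarith
      omega
    · have : i * N + N ≤ N * l := by nlinarith
      omega
  · rfl

theorem minpoly.coeff_eq_zero_of_aeval_eq_algebraMap {F A : Type*} [Field F] [Ring A]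
    [Algebra F A] {x : A} {f : F[X]} (hdeg : f.natDegree < (minpoly F x).natDegree) {a : F}
    (hf : Polynomial.aeval x f = algebraMap F A a) {r : ℕ} (hr : r ≠ 0) : f.coeff r = 0 := by
  have hfa : f - C a = 0 := by
    by_contra hne
    have := natDegree_le_natDegree (minpoly.degree_le_of_ne_zero F x hne (by simp [hf]))
    rw [natDegree_sub_C] at this
    omega
  simpa [coeff_C, hr] using congr_arg (coeff · r) hfa

theorem IsPrimitiveRoot.coeff_periodic_of_sum_eq_zero {K : Type*} [Field K] [CharZero K]
    {p t : ℕ} (hp : p.Prime) {ζ : K} (hζ : IsPrimitiveRoot ζ (p ^ (t + 1))) (m : ℕ → ℚ)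
    (hsum : ∑ a ∈ range (p ^ (t + 1)), (m a : K) * ζ ^ a = 0) {i j : ℕ} (hi : i < p)
    (hj : j < p ^ t) : m (i * p ^ t + j) = m j := by
  set f : ℚ[X] := ∑ a ∈ range (p ^ (t + 1)), C (m a) * X ^ a
  have hcoeff : ∀ a < p ^ (t + 1), f.coeff a = m a := fun a ha => by simp [f, ha]
  have hpos : 0 < p ^ (t + 1) := pow_pos hp.pos _
  obtain ⟨h, hfh⟩ : cyclotomic (p ^ (t + 1)) ℚ ∣ f := by
    rw [cyclotomic_eq_minpoly_rat hζ hpos]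
    exact minpoly.dvd ℚ ζ (by simpa [f, map_sum] using hsum)
  have hdeg : h.natDegree < p ^ t := by
    rcases eq_or_ne h 0 with rfl | hh0
    · simp [pow_pos hp.pos]
    have hf : f.natDegree < p ^ (t + 1) := natDegree_sum_range_C_mul_X_pow_lt hpos.ne' m
    rw [hfh, natDegree_mul (cyclotomic_ne_zero _ ℚ) hh0, natDegree_cyclotomic,
      Nat.totient_prime_pow_succ hp, pow_succ] at hf
    have : p ^ t * (p - 1) + p ^ t = p ^ t * p := by
      rw [← mul_add_one, Nat.sub_one_add_one hp.ne_zero]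
    omega
  have hlt : ∀ l < p, l * p ^ t + j < p ^ (t + 1) := fun l hl => by
    rw [pow_succ]
    nlinarith
  rw [← hcoeff _ (hlt i hi), ← hcoeff j (by simpa using hlt 0 hp.pos), hfh,
    cyclotomic_prime_pow_eq_geom_sum hp, coeff_geom_sum_X_pow_mul hdeg hi hj]
  simpa using (coeff_geom_sum_X_pow_mul hdeg hp.pos hj).symm

theorem IsPrimitiveRoot.dvd_sum_comp_of_sum_eq_zero {K : Type*} [Field K] [CharZero K]
    {p t : ℕ} (hp : p.Prime) {ζ : K} (hζ : IsPrimitiveRoot ζ (p ^ (t + 1))) (m : ℕ → ℕ)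
    (hsum : ∑ a ∈ range (p ^ (t + 1)), (m a : K) * ζ ^ a = 0) (F : ℕ → ℕ) :
    p ∣ ∑ a ∈ range (p ^ (t + 1)), F (m a) := by
  have hper : ∀ i < p, ∀ j < p ^ t, m (i * p ^ t + j) = m j := fun i hi j hj => by
    exact_mod_cast hζ.coeff_periodic_of_sum_eq_zero hp (fun a => m a) (by simpa using hsum) hi hj
  rw [pow_succ', sum_range_mul_eq_sum_sum, sum_comm]
  refine dvd_sum fun j hj => ⟨F (m j), ?_⟩
  rw [sum_congr rfl fun i hi => by rw [hper i (mem_range.1 hi) j (mem_range.1 hj)]]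
  simp

theorem IsPrimitiveRoot.orderOf_pow_eq_iff {M : Type*} [CommMonoid M] {p e : ℕ} (hp : p.Prime)
    (he : e ≠ 0) {ξ : M} (hξ : IsPrimitiveRoot ξ (p ^ e)) (a : ℕ) :
    orderOf (ξ ^ a) = p ^ e ↔ ¬ p ∣ a := by
  rw [← IsPrimitiveRoot.iff_orderOf, hξ.pow_iff_coprime (pow_pos hp.pos e),
    Nat.coprime_pow_right_iff (Nat.pos_of_ne_zero he), Nat.coprime_comm, hp.coprime_iff_not_dvd]

section MultisetOfRootsOfUnity

variable {R : Type*} [CommRing R] [IsDomain R] [DecidableEq R] {N : ℕ} [NeZero N] {ξ : R}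

theorem IsPrimitiveRoot.sum_toFinset_eq_sum_range {M : Type*} [AddCommMonoid M]
    (hξ : IsPrimitiveRoot ξ N) {s : Multiset R} (hs : ∀ z ∈ s, z ^ N = 1) (g : R → ℕ → M)
    (hg : ∀ z, g z 0 = 0) :
    ∑ z ∈ s.toFinset, g z (s.count z) = ∑ a ∈ range N, g (ξ ^ a) (s.count (ξ ^ a)) := by
  have hsub : s.toFinset ⊆ (range N).image (ξ ^ ·) := fun z hz => by
    obtain ⟨a, ha, rfl⟩ := hξ.eq_pow_of_pow_eq_one (hs z (Multiset.mem_toFinset.1 hz))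
    exact mem_image_of_mem _ (mem_range.2 ha)
  rw [sum_subset hsub fun z _ hz => by rw [Multiset.count_eq_zero.2 (by simpa using hz), hg],
    sum_image fun a ha b hb => hξ.pow_inj (mem_range.1 ha) (mem_range.1 hb)]

theorem IsPrimitiveRoot.multiset_sum_eq_sum_range (hξ : IsPrimitiveRoot ξ N) {s : Multiset R}
    (hs : ∀ z ∈ s, z ^ N = 1) : s.sum = ∑ a ∈ range N, (s.count (ξ ^ a) : R) * ξ ^ a := by
  rw [sum_multiset_count, hξ.sum_toFinset_eq_sum_range hs (fun z c => c • z) fun z => zero_smul ℕ z]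
  simp only [nsmul_eq_mul]

theorem IsPrimitiveRoot.card_filter_eq_sum_range (hξ : IsPrimitiveRoot ξ N) {s : Multiset R}
    (hs : ∀ z ∈ s, z ^ N = 1) (P : R → Prop) [DecidablePred P] :
    (s.filter P).card = ∑ a ∈ range N, if P (ξ ^ a) then s.count (ξ ^ a) else 0 := by
  rw [← Multiset.sum_count_eq_card fun z hz =>
    Multiset.mem_toFinset.2 (Multiset.mem_of_mem_filter hz)]
  simp only [Multiset.count_filter]
  exact hξ.sum_toFinset_eq_sum_range hs (fun z c => if P z then c else 0) fun z => by simp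

theorem IsPrimitiveRoot.card_toFinset_filter_eq_sum_range (hξ : IsPrimitiveRoot ξ N)
    {s : Multiset R} (hs : ∀ z ∈ s, z ^ N = 1) (P : R → Prop) [DecidablePred P] :
    (s.toFinset.filter P).card =
      ∑ a ∈ range N, if P (ξ ^ a) then (if s.count (ξ ^ a) = 0 then 0 else 1) else 0 := by
  rw [card_filter, ← hξ.sum_toFinset_eq_sum_range hs
    (fun z c => if P z then (if c = 0 then 0 else 1) else 0) fun z => by simp]
  refine sum_congr rfl fun z hz => ?_
  rw [if_neg (Multiset.count_ne_zero.2 (Multiset.mem_toFinset.1 hz))]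

end MultisetOfRootsOfUnity

theorem Qcyc_mono {N M : ℕ} (h : N ∣ M) : Qcyc N ≤ Qcyc M := by
  obtain ⟨c, rfl⟩ := h
  refine adjoin.mono _ _ _ fun z (hz : z ^ N = 1) => ?_
  simp [pow_mul, hz]

theorem Qcyc_eq_adjoin {N : ℕ} [NeZero N] {ρ : ℂ} (hρ : IsPrimitiveRoot ρ N) :
    Qcyc N = ℚ⟮ρ⟯ := by
  refine le_antisymm (adjoin_le_iff.2 fun z hz => ?_) (adjoin_le_iff.2 ?_)
  · obtain ⟨i, -, rfl⟩ := hρ.eq_pow_of_pow_eq_one hz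
    exact pow_mem (mem_adjoin_simple_self ℚ ρ) i
  · rintro z rfl
    exact subset_adjoin ℚ _ hρ.pow_eq_one

theorem finrank_Qcyc {N : ℕ} (hN : 0 < N) : Module.finrank ℚ (Qcyc N) = N.totient := by
  have : NeZero N := ⟨hN.ne'⟩
  have hρ := Complex.isPrimitiveRoot_exp N hN.ne'
  rw [Qcyc_eq_adjoin hρ, adjoin.finrank (hρ.isIntegral hN).tower_top,
    ← cyclotomic_eq_minpoly_rat hρ hN, natDegree_cyclotomic]

theorem Qcyc_mul_le_sup {a b : ℕ} (hab : a.Coprime b) : Qcyc (a * b) ≤ Qcyc a ⊔ Qcyc b := by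
  refine adjoin_le_iff.2 fun z (hz : z ^ (a * b) = 1) => ?_
  rcases eq_or_ne z 0 with rfl | hz0
  · exact zero_mem _
  have hbez : (a : ℤ) * a.gcdA b + b * a.gcdB b = 1 := by
    rw [← Nat.gcd_eq_gcd_ab, hab, Nat.cast_one]
  have hza : z ^ a ∈ Qcyc b := subset_adjoin ℚ _ (show (z ^ a) ^ b = 1 by rw [← pow_mul, hz])
  have hzb : z ^ b ∈ Qcyc a :=
    subset_adjoin ℚ _ (show (z ^ b) ^ a = 1 by rw [← pow_mul, mul_comm, hz])
  have : z = (z ^ a) ^ a.gcdA b * (z ^ b) ^ a.gcdB b := by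
    rw [← zpow_natCast, ← zpow_natCast, ← zpow_mul, ← zpow_mul, ← zpow_add₀ hz0, hbez, zpow_one]
  rw [this]
  exact mul_mem (zpow_mem (le_sup_right (a := Qcyc a) hza) _)
    (zpow_mem (le_sup_left (b := Qcyc b) hzb) _)

theorem natDegree_minpoly_Qcyc {p e n : ℕ} (hp : p.Prime) (he : e ≠ 0) (hpn : ¬ p ∣ n) {ξ : ℂ}
    (hξ : IsPrimitiveRoot ξ (p ^ (e + 1))) : (minpoly (Qcyc (p ^ e * n)) ξ).natDegree = p := by
  set K := Qcyc (p ^ e * n)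
  have : NeZero p := ⟨hp.ne_zero⟩
  have hn : 0 < n := Nat.pos_of_ne_zero (by rintro rfl; exact hpn (dvd_zero p))
  have hsup : K ⊔ ℚ⟮ξ⟯ = Qcyc (p ^ (e + 1) * n) := by
    refine le_antisymm (sup_le (Qcyc_mono ?_) ?_) ((Qcyc_mul_le_sup ?_).trans (sup_le ?_ ?_))
    · exact mul_dvd_mul_right (pow_dvd_pow p e.le_succ) n
    · rw [← Qcyc_eq_adjoin hξ]
      exact Qcyc_mono (dvd_mul_right _ n)
    · exact Nat.Coprime.pow_left _ (hp.coprime_iff_not_dvd.2 hpn)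
    · exact (Qcyc_eq_adjoin hξ).le.trans le_sup_right
    · exact (Qcyc_mono (dvd_mul_left n _)).trans le_sup_left
  have hKξ : K ≤ K ⊔ ℚ⟮ξ⟯ := le_sup_left
  have hext : extendScalars hKξ = K⟮ξ⟯ :=
    restrictScalars_injective ℚ (restrictScalars_adjoin_eq_sup ℚ K {ξ}).symm
  have hpos : 0 < p ^ e * n := Nat.mul_pos (pow_pos hp.pos e) hn
  have htower := finrank_bot_mul_relfinrank hKξ
  rw [relfinrank_eq_finrank_of_le hKξ, hext,
    adjoin.finrank (hξ.isIntegral (pow_pos hp.pos _)).tower_top, hsup, finrank_Qcyc hpos,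
    finrank_Qcyc (Nat.mul_pos (pow_pos hp.pos _) hn), pow_succ', mul_assoc,
    Nat.totient_mul_of_prime_of_dvd hp (dvd_mul_of_dvd_left (dvd_pow_self p he) n),
    mul_comm p] at htower
  exact Nat.eq_of_mul_eq_mul_left (Nat.totient_pos.2 hpos) htower

theorem dvd_sum_of_sum_pow_mem_Qcyc {p t n : ℕ} (hp : p.Prime) (hpn : ¬ p ∣ n) {ξ : ℂ}
    (hξ : IsPrimitiveRoot ξ (p ^ (t + 2))) (m : ℕ → ℕ)
    (hmem : ∑ a ∈ range (p ^ (t + 2)), (m a : ℂ) * ξ ^ a ∈ Qcyc (p ^ (t + 1) * n))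
    (F : ℕ → ℕ) : p ∣ ∑ a ∈ range (p ^ (t + 2)), if p ∣ a then 0 else F (m a) := by
  set K := Qcyc (p ^ (t + 1) * n)
  have hη : IsPrimitiveRoot (ξ ^ p) (p ^ (t + 1)) := hξ.pow (pow_pos hp.pos _) (pow_succ' _ _)
  have hηK : ξ ^ p ∈ K := subset_adjoin ℚ _
    (show (ξ ^ p) ^ (p ^ (t + 1) * n) = 1 by rw [pow_mul, hη.pow_eq_one, one_pow])
  set c : ℕ → ℂ := fun r => ∑ q ∈ range (p ^ (t + 1)), (m (q * p + r) : ℂ) * (ξ ^ p) ^ q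
  have hcK : ∀ r, c r ∈ K := fun r =>
    sum_mem fun q _ => mul_mem (_root_.natCast_mem K _) (pow_mem hηK q)
  have hsplit : ∑ a ∈ range (p ^ (t + 2)), (m a : ℂ) * ξ ^ a = ∑ r ∈ range p, c r * ξ ^ r := by
    rw [pow_succ, sum_range_mul_eq_sum_sum, sum_comm]
    simp only [c, sum_mul, pow_add, ← pow_mul, mul_comm p, mul_assoc]
  -- `ξ` has degree `p` over `K`, so `1, ξ, …, ξ ^ (p - 1)` are linearly independent over `K`.
  have hc : ∀ r, 0 < r → r < p → c r = 0 := fun r hr0 hrp => by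
    let f : K[X] := ∑ r ∈ range p, C ⟨c r, hcK r⟩ * X ^ r
    have hf : Polynomial.aeval ξ f = algebraMap K ℂ ⟨_, hmem⟩ := by simp [f, hsplit]
    have hdeg : f.natDegree < (minpoly K ξ).natDegree := by
      rw [natDegree_minpoly_Qcyc hp (Nat.succ_ne_zero t) hpn hξ]
      exact natDegree_sum_range_C_mul_X_pow_lt hp.ne_zero _
    have hcoeff : f.coeff r = ⟨c r, hcK r⟩ := by simp [f, hrp]
    have := minpoly.coeff_eq_zero_of_aeval_eq_algebraMap hdeg hf hr0.ne'
    rw [hcoeff] at this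
    exact congr_arg Subtype.val this
  rw [pow_succ, sum_range_mul_eq_sum_sum, sum_comm]
  refine dvd_sum fun r hr => ?_
  rcases Nat.eq_zero_or_pos r with rfl | hr0
  · simp
  have hndvd : ∀ q, ¬ p ∣ q * p + r := fun q h =>
    Nat.not_dvd_of_pos_of_lt hr0 (mem_range.1 hr) ((Nat.dvd_add_right (dvd_mul_left p q)).1 h)
  simp only [hndvd, if_false]
  exact hη.dvd_sum_comp_of_sum_eq_zero hp (fun q => m (q * p + r)) (hc r hr0 (mem_range.1 hr)) F

theorem Nat.exists_not_dvd_and_dvd_pow_mul {p N e : ℕ} (hp : p.Prime) (hN : N ≠ 0)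
    (h : ¬ p ^ (e + 1) ∣ N) : ∃ n, ¬ p ∣ n ∧ N ∣ p ^ e * n := by
  refine ⟨N / p ^ N.factorization p, Nat.not_dvd_ordCompl hp hN, ?_⟩
  have he : N.factorization p ≤ e := by
    rw [hp.pow_dvd_iff_le_factorization hN] at h
    omega
  conv_lhs => rw [← Nat.ordProj_mul_ordCompl_eq_self N p]
  exact mul_dvd_mul_right (pow_dvd_pow p he) _

open scoped Classical in
theorem stmt5_general (p k : ℕ) (hp : p.Prime) (hk : 2 ≤ k)
    (s : Multiset ℂ) (hs : ∀ z ∈ s, z ^ p ^ k = 1)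
    (hcard : ¬ p ∣ (s.filter (fun z => orderOf z = p ^ k)).card ∨
      ¬ p ∣ (s.toFinset.filter (fun z => orderOf z = p ^ k)).card) :
    IsConductorOf s.sum (p ^ k) := by
  obtain ⟨t, rfl⟩ : ∃ t, k = t + 2 := ⟨k - 2, by omega⟩
  have : NeZero (p ^ (t + 2)) := ⟨pow_ne_zero _ hp.ne_zero⟩
  obtain ⟨ξ, hξ⟩ : ∃ ξ : ℂ, IsPrimitiveRoot ξ (p ^ (t + 2)) :=
    ⟨_, Complex.isPrimitiveRoot_exp _ (NeZero.ne _)⟩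
  refine ⟨⟨pow_pos hp.pos _, multiset_sum_mem _ fun z hz => subset_adjoin ℚ _ (hs z hz)⟩,
    fun N ⟨hN, hmem⟩ => Nat.le_of_dvd hN ?_⟩
  by_contra hdvd
  obtain ⟨n, hpn, hNn⟩ := Nat.exists_not_dvd_and_dvd_pow_mul hp hN.ne' hdvd
  have key := dvd_sum_of_sum_pow_mem_Qcyc hp hpn hξ (fun a => s.count (ξ ^ a))
    (hξ.multiset_sum_eq_sum_range hs ▸ Qcyc_mono hNn hmem)
  have hord := hξ.orderOf_pow_eq_iff hp (Nat.succ_ne_zero _)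
  rcases hcard with h | h
  · exact h (by simpa [hξ.card_filter_eq_sum_range hs, hord] using key id)
  · refine h ?_
    simpa [hξ.card_toFinset_filter_eq_sum_range hs, hord] using
      key fun c => if c = 0 then 0 else 1

open scoped Classical in
/-- if the number of entries of `s` of order exactly `p^k` (with multiplicity),
or the number of distinct entries of `s` of order exactly `p^k`, is not divisible by `p`,
then the conductor of `|s|` is `p^k`. -/
theorem stmt5 (p k : ℕ) (hp : p.Prime) (hodd : Odd p) (hk : 2 ≤ k)
    (s : Multiset ℂ) (hs : ∀ z ∈ s, z ^ p ^ k = 1)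
    (hcard : ¬ p ∣ (s.filter (fun z => orderOf z = p ^ k)).card ∨
      ¬ p ∣ (s.toFinset.filter (fun z => orderOf z = p ^ k)).card) :
    IsConductorOf s.sum (p ^ k) :=
  stmt5_general p k hp hk s hs hcard
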